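/- arXiv:2008.09717 — 4 statements merged into one kernel-verified Lean document; each statement's English description precedes it below -/
import Mathlib

section
/- Let 𝒢 = (S,E) be a finite simple graph and let λ be a coherent component of 𝒢. Then the subgraph induced on λ is either complete or edgeless: either αβ ∈ E for all distinct α, β ∈ λ, or αβ ∉ E for all α, β ∈ λ. -/
/-- `α ≺ β ↔ Ω'(α) ⊆ Ω(β)`, where `Ω'` is the open and `Ω` the closed neighborhood. -/
def GraphPrec {S : Type*} (G : SimpleGraph S) (α β : S) : Prop :=
  G.neighborSet α ⊆ insert β (G.neighborSet β)

/-- `α ∼ β ↔ α ≺ β ∧ β ≺ α`. -/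
def GraphSim {S : Type*} (G : SimpleGraph S) (α β : S) : Prop :=
  GraphPrec G α β ∧ GraphPrec G β α

/-- A coherent component of `𝒢` is an equivalence class of the relation `∼`. -/
def IsCoherentComponent {S : Type*} (G : SimpleGraph S) (l : Set S) : Prop :=
  ∃ α : S, l = {β | GraphSim G α β}

/-- For a finite simple graph `𝒢 = (S, E)` and a coherent component `λ`
of `𝒢`, the subgraph induced on `λ` is either complete or edgeless: either
`αβ ∈ E` for all distinct `α, β ∈ λ`, or `αβ ∉ E` for all `α, β ∈ λ`. -/
theorem coherentComponent_complete_or_edgeless {S : Type*} [Fintype S] (G : SimpleGraph S)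
    (l : Set S) (hl : IsCoherentComponent G l) :
    (∀ α ∈ l, ∀ β ∈ l, α ≠ β → G.Adj α β) ∨ (∀ α ∈ l, ∀ β ∈ l, ¬ G.Adj α β) := by
  obtain ⟨a, rfl⟩ := hl
  by_cases h : ∃ μ ∈ {β | GraphSim G a β}, G.Adj a μ
  · left
    obtain ⟨μ, hμ, haμ⟩ := h
    have step2 : ∀ δ ∈ {β | GraphSim G a β}, δ ≠ a → G.Adj a δ := by
      intro δ hδ hne
      have h1 : μ ∈ insert δ (G.neighborSet δ) := hδ.1 haμ
      rcases h1 with h1 | h1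
      · exact h1 ▸ haμ
      · have h2 : δ ∈ insert a (G.neighborSet a) := hμ.2 h1.symm
        rcases h2 with h2 | h2
        · exact absurd h2 hne
        · exact h2
    intro α hα β hβ hne
    rcases eq_or_ne α a with rfl | hαa
    · exact step2 β hβ hne.symm
    rcases eq_or_ne β a with rfl | hβa
    · exact (step2 α hα hαa).symm
    have haα : α ∈ G.neighborSet a := step2 α hα hαa
    rcases hβ.1 haα with h3 | h3
    · exact absurd h3 hne
    · exact h3.symm
  · right
    push_neg at h
    intro α hα β hβ hadj
    have h1 : β ∈ insert a (G.neighborSet a) := hα.2 hadj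
    rcases h1 with rfl | h1
    · exact h α hα hadj.symm
    · exact h β hβ h1
end

section
/- Let 𝒢 = (S,E) be a finite simple graph and let λ ≠ μ be two distinct coherent components of 𝒢. If there exist α ∈ λ and β ∈ μ with αβ ∈ E, then γδ ∈ E for all γ ∈ λ and all δ ∈ μ. -/
section

variable {S : Type*} {G : SimpleGraph S} {a b c : S}

theorem graphPrec_refl (G : SimpleGraph S) (a : S) : GraphPrec G a a :=
  Set.subset_insert a _

theorem GraphPrec.adj_of_adj (h : GraphPrec G a c) (hab : G.Adj a b) (hbc : b ≠ c) :
    G.Adj c b :=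
  (h hab).resolve_left hbc

theorem GraphPrec.trans (hab : GraphPrec G a b) (hbc : GraphPrec G b c) : GraphPrec G a c := by
  intro x hax
  rcases hab hax with rfl | hbx
  · -- `x = b`: then `a ∈ Ω'(b) ⊆ Ω(c)`, and if `a ≠ c` then `c ∈ Ω'(a) ⊆ Ω(b)`.
    rcases hbc hax.symm with rfl | hca
    · exact Or.inr hax
    · rcases hab hca.symm with rfl | hbc'
      · exact Or.inl rfl
      · exact Or.inr hbc'.symm
  · exact hbc hbx

theorem graphSim_equivalence (G : SimpleGraph S) : Equivalence (GraphSim G) where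
  refl a := ⟨graphPrec_refl G a, graphPrec_refl G a⟩
  symm h := ⟨h.2, h.1⟩
  trans hab hbc := ⟨hab.1.trans hbc.1, hbc.2.trans hab.2⟩

namespace IsCoherentComponent

variable {l m : Set S} {x y : S}

theorem eq_setOf_graphSim (hl : IsCoherentComponent G l) (hx : x ∈ l) :
    l = {y | GraphSim G x y} := by
  obtain ⟨a, rfl⟩ := hl
  have hax : GraphSim G a x := hx
  ext y
  exact ⟨(graphSim_equivalence G).trans ((graphSim_equivalence G).symm hax),
    (graphSim_equivalence G).trans hax⟩

theorem graphSim_of_mem (hl : IsCoherentComponent G l) (hx : x ∈ l) (hy : y ∈ l) :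
    GraphSim G x y := by
  rw [hl.eq_setOf_graphSim hx] at hy
  exact hy

theorem eq_of_mem_of_mem (hl : IsCoherentComponent G l) (hm : IsCoherentComponent G m)
    (hxl : x ∈ l) (hxm : x ∈ m) : l = m := by
  rw [hl.eq_setOf_graphSim hxl, hm.eq_setOf_graphSim hxm]

end IsCoherentComponent

end

theorem coherentComponents_adjacent_general {S : Type*} (G : SimpleGraph S)
    (l m : Set S) (hl : IsCoherentComponent G l) (hm : IsCoherentComponent G m)
    (hne : l ≠ m) (α : S) (hα : α ∈ l) (β : S) (hβ : β ∈ m) (hαβ : G.Adj α β) :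
    ∀ γ ∈ l, ∀ δ ∈ m, G.Adj γ δ := by
  intro γ hγ δ hδ
  have hγm : γ ∉ m := fun h => hne (hl.eq_of_mem_of_mem hm hγ h)
  have hδl : δ ∉ l := fun h => hne (hl.eq_of_mem_of_mem hm h hδ)
  have hγβ : G.Adj γ β :=
    (hl.graphSim_of_mem hα hγ).1.adj_of_adj hαβ (ne_of_mem_of_not_mem hβ hγm)
  exact ((hm.graphSim_of_mem hβ hδ).1.adj_of_adj hγβ.symm (ne_of_mem_of_not_mem hγ hδl)).symm

/-- Let `𝒢 = (S, E)` be a finite simple graph and `λ ≠ μ` two distinct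
coherent components of `𝒢`.  If some `α ∈ λ` and `β ∈ μ` are adjacent, then every
`γ ∈ λ` is adjacent to every `δ ∈ μ`. -/
theorem coherentComponents_adjacent {S : Type*} [Fintype S] (G : SimpleGraph S)
    (l m : Set S) (hl : IsCoherentComponent G l) (hm : IsCoherentComponent G m)
    (hne : l ≠ m) (α : S) (hα : α ∈ l) (β : S) (hβ : β ∈ m) (hαβ : G.Adj α β) :
    ∀ γ ∈ l, ∀ δ ∈ m, G.Adj γ δ :=
  coherentComponents_adjacent_general G l m hl hm hne α hα β hβ hαβ
end

section
/- Let K be a field of characteristic 0 and let V = ⊕_{i∈I} V_i be a finite-dimensional K-vector space given as an internal direct sum of subspaces indexed by a finite set I. For j ∈ I write V̂_j = ⊕_{i≠j} V_i, and embed GL(V_j) into GL(V) as the subgroup of invertible linear maps g with g(V_j) = V_j which restrict to the identity on V̂_j. Then for every g ∈ GL(V) and all j, k ∈ I: g GL(V_j) g⁻¹ = GL(V_k) if and only if g(V_j) = V_k and g(V̂_j) = V̂_k. -/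
section

variable {K V : Type*} [Field K] [CharZero K] [AddCommGroup V] [Module K V]
variable {I : Type*} [Fintype I] [DecidableEq I]

/-- `V̂_j = ⊕_{i ≠ j} V_i`. -/
def hatSubmodule (Vc : I → Submodule K V) (j : I) : Submodule K V :=
  ⨆ (i) (_ : i ≠ j), Vc i

/-- The copy of `GL(V_j)` inside `GL(V)`: all invertible linear maps `g` of `V` with
`g(V_j) = V_j` which restrict to the identity on `V̂_j`. -/
def GLFactor (Vc : I → Submodule K V) (j : I) : Set (V ≃ₗ[K] V) :=
  {g | Submodule.map (g : V →ₗ[K] V) (Vc j) = Vc j ∧ ∀ x ∈ hatSubmodule Vc j, g x = x}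

end

/-!
Conjugation by `g` carries the copy of `GL(A)` acting trivially on a complement `B` to the copy
of `GL(g A)` acting trivially on `g B`. So it suffices that, for complementary `A` and `B`, this
subgroup determines the pair: `B` is its space of common fixed vectors and `A` is the set of its
displacements `h x - x`. Both are witnessed by the map that is `2` on `A` and the identity on
`B`, which is where `2 ≠ 0` is needed.
-/

section GLFactorOf

variable {K V : Type*} [Field K] [AddCommGroup V] [Module K V] {A B : Submodule K V}

theorem DirectSum.IsInternal.isCompl_hatSubmodule {I : Type*} [DecidableEq I]
    {Vc : I → Submodule K V} (hinternal : DirectSum.IsInternal Vc) (j : I) :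
    IsCompl (Vc j) (hatSubmodule Vc j) :=
  ⟨hinternal.submodule_iSupIndep j, codisjoint_iff.2 <| by
    rw [hatSubmodule, ← iSup_split_single, hinternal.submodule_iSup_eq_top]⟩

def GLFactorOf (A B : Submodule K V) : Set (V ≃ₗ[K] V) :=
  {g | A.map (g : V →ₗ[K] V) = A ∧ ∀ x ∈ B, g x = x}

theorem GLFactor_eq_GLFactorOf {I : Type*} (Vc : I → Submodule K V) (j : I) :
    GLFactor Vc j = GLFactorOf (Vc j) (hatSubmodule Vc j) :=
  rfl

theorem conj_mem_GLFactorOf_map {h : V ≃ₗ[K] V} (hh : h ∈ GLFactorOf A B) (g : V ≃ₗ[K] V) :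
    (g.symm.trans h).trans g ∈ GLFactorOf (A.map (g : V →ₗ[K] V)) (B.map (g : V →ₗ[K] V)) := by
  obtain ⟨hA, hB⟩ := hh
  refine ⟨?_, ?_⟩
  · simp only [LinearEquiv.coe_trans, Submodule.map_comp, (Submodule.map_symm_eq_iff g).2 rfl, hA]
  · rintro _ ⟨x, hx, rfl⟩
    simp [hB x hx]

theorem image_conj_GLFactorOf (g : V ≃ₗ[K] V) :
    (fun h : V ≃ₗ[K] V => (g.symm.trans h).trans g) '' GLFactorOf A B =
      GLFactorOf (A.map (g : V →ₗ[K] V)) (B.map (g : V →ₗ[K] V)) := by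
  refine subset_antisymm (Set.image_subset_iff.2 fun h hh => conj_mem_GLFactorOf_map hh g)
    fun h hh => ⟨(g.trans h).trans g.symm, ?_, by ext; simp⟩
  simpa only [(Submodule.map_symm_eq_iff g).2 rfl, LinearEquiv.symm_symm] using
    conj_mem_GLFactorOf_map hh g.symm

section dilation

variable (hAB : IsCompl A B)

noncomputable def dilationOfIsCompl (a : K) (ha : a ≠ 0) : V ≃ₗ[K] V :=
  (A.prodEquivOfIsCompl B hAB).symm ≪≫ₗ
    (LinearEquiv.smulOfNeZero K A a ha).prodCongr (LinearEquiv.refl K B) ≪≫ₗ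
    A.prodEquivOfIsCompl B hAB

theorem dilationOfIsCompl_apply (a : K) (ha : a ≠ 0) (x : V) :
    dilationOfIsCompl hAB a ha x = a • A.projection B hAB x + B.projection A hAB.symm x := by
  simp [dilationOfIsCompl]

theorem dilationOfIsCompl_apply_sub_self (a : K) (ha : a ≠ 0) (x : V) :
    dilationOfIsCompl hAB a ha x - x = (a - 1) • A.projection B hAB x := by
  rw [dilationOfIsCompl_apply, Submodule.projection_eq_self_sub_projection hAB, sub_smul, one_smul]
  abel

theorem dilationOfIsCompl_mem_GLFactorOf (a : K) (ha : a ≠ 0) :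
    dilationOfIsCompl hAB a ha ∈ GLFactorOf A B := by
  have apply_of_mem_left {x : V} (hx : x ∈ A) : dilationOfIsCompl hAB a ha x = a • x := by
    rw [dilationOfIsCompl_apply, Submodule.projection_apply_of_mem_left hAB hx,
      Submodule.projection_apply_of_mem_right hAB.symm hx, add_zero]
  constructor
  · refine le_antisymm ?_ fun x hx => ⟨a⁻¹ • x, A.smul_mem _ hx, ?_⟩
    · rintro _ ⟨x, hx, rfl⟩
      simpa [apply_of_mem_left hx] using A.smul_mem a hx
    · change dilationOfIsCompl hAB a ha (a⁻¹ • x) = x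
      rw [map_smul, apply_of_mem_left hx, smul_smul, inv_mul_cancel₀ ha, one_smul]
  · intro x hx
    rw [dilationOfIsCompl_apply, Submodule.projection_apply_of_mem_right hAB hx,
      Submodule.projection_apply_of_mem_left hAB.symm hx, smul_zero, zero_add]

end dilation

theorem sub_mem_of_mem_GLFactorOf (hAB : IsCompl A B) {h : V ≃ₗ[K] V} (hh : h ∈ GLFactorOf A B)
    (y : V) : h y - y ∈ A := by
  obtain ⟨hA, hB⟩ := hh
  have hPy : h (A.projection B hAB y) ∈ A :=
    hA.le (Submodule.mem_map_of_mem (A.projection_apply_mem hAB y))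
  rw [← A.projection_add_projection_eq_self hAB y, map_add,
    hB _ (B.projection_apply_mem hAB.symm y)]
  convert A.sub_mem hPy (A.projection_apply_mem hAB y) using 1
  abel

variable [NeZero (2 : K)]

theorem mem_iff_forall_mem_GLFactorOf_apply_eq (hAB : IsCompl A B) {x : V} :
    x ∈ B ↔ ∀ h ∈ GLFactorOf A B, h x = x := by
  refine ⟨fun hx h hh => hh.2 x hx, fun hfix => ?_⟩
  have := dilationOfIsCompl_apply_sub_self hAB 2 two_ne_zero x
  rw [hfix _ (dilationOfIsCompl_mem_GLFactorOf hAB 2 two_ne_zero), sub_self] at this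
  norm_num at this
  exact (A.projection_apply_eq_zero_iff hAB).1 this.symm

theorem mem_iff_exists_mem_GLFactorOf_sub_eq (hAB : IsCompl A B) {y : V} :
    y ∈ A ↔ ∃ h ∈ GLFactorOf A B, ∃ x, h x - x = y := by
  refine ⟨fun hy => ⟨_, dilationOfIsCompl_mem_GLFactorOf hAB 2 two_ne_zero, y, ?_⟩, ?_⟩
  · rw [dilationOfIsCompl_apply_sub_self, Submodule.projection_apply_of_mem_left hAB hy]
    norm_num
  · rintro ⟨h, hh, x, rfl⟩
    exact sub_mem_of_mem_GLFactorOf hAB hh x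

theorem GLFactorOf_inj {A' B' : Submodule K V} (hAB : IsCompl A B) (hAB' : IsCompl A' B') :
    GLFactorOf A B = GLFactorOf A' B' ↔ A = A' ∧ B = B' := by
  refine ⟨fun h => ⟨?_, ?_⟩, fun ⟨hA, hB⟩ => hA ▸ hB ▸ rfl⟩ <;> ext x
  · rw [mem_iff_exists_mem_GLFactorOf_sub_eq hAB, h, mem_iff_exists_mem_GLFactorOf_sub_eq hAB']
  · rw [mem_iff_forall_mem_GLFactorOf_apply_eq hAB, h, mem_iff_forall_mem_GLFactorOf_apply_eq hAB']

end GLFactorOf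

section

variable {K V : Type*} [Field K] [CharZero K] [AddCommGroup V] [Module K V]
variable {I : Type*} [Fintype I] [DecidableEq I]

theorem conj_GLFactor_iff_general (Vc : I → Submodule K V)
    (hinternal : DirectSum.IsInternal Vc) (g : V ≃ₗ[K] V) (j k : I) :
    (fun h : V ≃ₗ[K] V => (g.symm.trans h).trans g) '' GLFactor Vc j = GLFactor Vc k ↔
      Submodule.map (g : V →ₗ[K] V) (Vc j) = Vc k ∧
        Submodule.map (g : V →ₗ[K] V) (hatSubmodule Vc j) = hatSubmodule Vc k := by
  rw [GLFactor_eq_GLFactorOf, GLFactor_eq_GLFactorOf, image_conj_GLFactorOf]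
  exact GLFactorOf_inj ((Submodule.orderIsoMapComap g).isCompl (hinternal.isCompl_hatSubmodule j))
    (hinternal.isCompl_hatSubmodule k)

/-- Let `K` be a field of characteristic `0` and `V = ⊕_{i ∈ I} V_i` a
finite-dimensional `K`-vector space written as an internal direct sum of subspaces
indexed by a finite set `I`.  For `j ∈ I` write `V̂_j = ⊕_{i ≠ j} V_i`, and embed
`GL(V_j)` into `GL(V)` as the invertible linear maps preserving `V_j` and restricting
to the identity on `V̂_j`.  Then for every `g ∈ GL(V)` and all `j, k ∈ I`:
`g GL(V_j) g⁻¹ = GL(V_k)` if and only if `g(V_j) = V_k` and `g(V̂_j) = V̂_k`. -/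
theorem conj_GLFactor_iff [FiniteDimensional K V] (Vc : I → Submodule K V)
    (hinternal : DirectSum.IsInternal Vc) (g : V ≃ₗ[K] V) (j k : I) :
    (fun h : V ≃ₗ[K] V => (g.symm.trans h).trans g) '' GLFactor Vc j = GLFactor Vc k ↔
      Submodule.map (g : V →ₗ[K] V) (Vc j) = Vc k ∧
        Submodule.map (g : V →ₗ[K] V) (hatSubmodule Vc j) = hatSubmodule Vc k :=
  conj_GLFactor_iff_general Vc hinternal g j k
end
end

section
/- Let 𝒢 = (S,E) be a finite simple graph, K a field of characteristic 0, and 𝔫_𝒢^K the Lie algebra associated to 𝒢. For a permutation σ of S, the following are equivalent: (1) σ is a graph automorphism of 𝒢 (i.e., αβ ∈ E iff σ(α)σ(β) ∈ E); (2) there exists a Lie algebra automorphism φ of 𝔫_𝒢^K with φ(V) = V whose restriction to V is P_σ. -/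
/-!
A graph isomorphism `f` induces the linear map `α ↦ f α`, `α ∧ β ↦ ⁅f α, f β⁆` on the standard
bases. It preserves brackets because brackets of vertex vectors are central, and its inverse is
the map induced by `f⁻¹`, since Lie homomorphisms are determined by their values on the vertex
vectors, which generate. Conversely, `α` and `β` are adjacent iff `⁅α, β⁆ ≠ 0`, a condition that
Lie isomorphisms preserve.
-/

section

open Sum

variable {S : Type*} [Fintype S] [DecidableEq S] [LinearOrder S] (G : SimpleGraph S)
variable {K : Type*} [Field K] [CharZero K]
variable {L : Type*} [LieRing L] [LieAlgebra K L]

/-- The subspace `V ⊆ 𝔫_𝒢^K` spanned by the (basis vectors corresponding to) the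
vertices of the graph. -/
def vertexSpan (b : Module.Basis (S ⊕ G.edgeSet) K L) : Submodule K L :=
  Submodule.span K (Set.range fun α : S => b (inl α))

end

section

open Sum

theorem LinearMap.map_lie_of_basis {ι R L L' : Type*} [CommRing R] [LieRing L] [LieAlgebra R L]
    [LieRing L'] [LieAlgebra R L'] (b : Module.Basis ι R L) (f : L →ₗ[R] L')
    (h : ∀ i j, f ⁅b i, b j⁆ = ⁅f (b i), f (b j)⁆) (x y : L) : f ⁅x, y⁆ = ⁅f x, f y⁆ := by
  have hB : (LieModule.toEnd R L L : L →ₗ[R] L →ₗ[R] L).compr₂ f =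
      ((LieModule.toEnd R L' L' : L' →ₗ[R] L' →ₗ[R] L').comp f).compl₂ f :=
    LinearMap.ext_basis b b h
  exact LinearMap.congr_fun₂ hB x y

variable {S S' : Type*} [LinearOrder S] {G : SimpleGraph S} {G' : SimpleGraph S'}
variable {K : Type*} [CommRing K]
variable {L L' : Type*} [LieRing L] [LieAlgebra K L] [LieRing L'] [LieAlgebra K L']

/-- `b (inr e)` plays the role of `α ∧ β` for the edge `e = {α, β}` with `α < β`. -/
structure IsGraphLieBasis (G : SimpleGraph S) (b : Module.Basis (S ⊕ G.edgeSet) K L) : Prop where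
  lie_inl_inl_of_lt : ∀ α β : S, ∀ h : G.Adj α β, α < β →
    ⁅b (inl α), b (inl β)⁆ = b (inr ⟨s(α, β), G.mem_edgeSet.mpr h⟩)
  lie_inl_inl_of_not_adj : ∀ α β : S, ¬ G.Adj α β → ⁅b (inl α), b (inl β)⁆ = 0
  inr_lie : ∀ (e : G.edgeSet) (x : L), ⁅b (inr e), x⁆ = 0

variable {b : Module.Basis (S ⊕ G.edgeSet) K L} {b' : Module.Basis (S' ⊕ G'.edgeSet) K L'}

namespace IsGraphLieBasis

theorem lie_inl_inl_of_le (hb : IsGraphLieBasis G b) {α β : S} (h : G.Adj α β) (hle : α ≤ β) :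
    ⁅b (inl α), b (inl β)⁆ = b (inr ⟨s(α, β), G.mem_edgeSet.mpr h⟩) :=
  hb.lie_inl_inl_of_lt α β h (hle.lt_of_ne h.ne)

theorem lie_inl_inf_sup (hb : IsGraphLieBasis G b) (e : G.edgeSet) :
    ⁅b (inl e.1.inf), b (inl e.1.sup)⁆ = b (inr e) := by
  obtain ⟨z, hz⟩ := e
  induction z using Sym2.ind with
  | _ α β =>
    rcases le_total α β with hle | hle
    · simp only [Sym2.inf_mk, Sym2.sup_mk, inf_eq_left.mpr hle, sup_eq_right.mpr hle]
      exact hb.lie_inl_inl_of_le hz hle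
    · simp only [Sym2.inf_mk, Sym2.sup_mk, inf_eq_right.mpr hle, sup_eq_left.mpr hle]
      rw [hb.lie_inl_inl_of_le (G.adj_symm hz) hle]
      exact congrArg _ (congrArg _ (Subtype.ext Sym2.eq_swap))

theorem lie_lie_inl_inl (hb : IsGraphLieBasis G b) (α β : S) (x : L) :
    ⁅⁅b (inl α), b (inl β)⁆, x⁆ = 0 := by
  by_cases h : G.Adj α β
  · wlog hle : α ≤ β generalizing α β
    · rw [← lie_skew (b (inl α)), neg_lie, this β α h.symm (le_of_not_ge hle), neg_zero]
    rw [hb.lie_inl_inl_of_le h hle, hb.inr_lie]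
  · rw [hb.lie_inl_inl_of_not_adj α β h, zero_lie]

theorem lie_inl_inl_eq_zero_iff [Nontrivial K] (hb : IsGraphLieBasis G b) {α β : S} :
    ⁅b (inl α), b (inl β)⁆ = 0 ↔ ¬ G.Adj α β := by
  refine ⟨fun h0 h => ?_, hb.lie_inl_inl_of_not_adj α β⟩
  wlog hle : α ≤ β generalizing α β
  · exact this (by rw [← lie_skew, h0, neg_zero]) h.symm (le_of_not_ge hle)
  exact b.ne_zero _ (hb.lie_inl_inl_of_le h hle ▸ h0)

theorem lieHom_ext {L'' : Type*} [LieRing L''] [LieAlgebra K L''] (hb : IsGraphLieBasis G b)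
    {f g : L →ₗ⁅K⁆ L''} (h : ∀ α, f (b (inl α)) = g (b (inl α))) : f = g := by
  suffices (f : L →ₗ[K] L'') = g from LieHom.ext (LinearMap.congr_fun this)
  refine b.ext ?_
  rintro (α | e)
  · exact h α
  · simp only [LieHom.coe_toLinearMap, ← hb.lie_inl_inf_sup e, LieHom.map_lie, h]

end IsGraphLieBasis

variable (b b') in
/-- Since `f` need not be monotone, the image `⁅f α, f β⁆` of `α ∧ β` is only `± f α ∧ f β`. -/
noncomputable def graphIsoLinearMap (f : G ≃g G') : L →ₗ[K] L' :=
  b.constr K <| Sum.elim (fun α => b' (inl (f α)))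
    fun e => ⁅b' (inl (f e.1.inf)), b' (inl (f e.1.sup))⁆

@[simp]
theorem graphIsoLinearMap_inl (f : G ≃g G') (α : S) :
    graphIsoLinearMap b b' f (b (inl α)) = b' (inl (f α)) :=
  b.constr_basis K _ _

@[simp]
theorem graphIsoLinearMap_inr (f : G ≃g G') (e : G.edgeSet) :
    graphIsoLinearMap b b' f (b (inr e)) = ⁅b' (inl (f e.1.inf)), b' (inl (f e.1.sup))⁆ :=
  b.constr_basis K _ _

section

variable [LinearOrder S']

theorem graphIsoLinearMap_lie_inl_inl (hb : IsGraphLieBasis G b) (hb' : IsGraphLieBasis G' b')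
    (f : G ≃g G') (α β : S) :
    graphIsoLinearMap b b' f ⁅b (inl α), b (inl β)⁆ = ⁅b' (inl (f α)), b' (inl (f β))⁆ := by
  by_cases h : G.Adj α β
  · wlog hle : α ≤ β generalizing α β
    · rw [← lie_skew (b (inl α)), map_neg, this β α h.symm (le_of_not_ge hle), lie_skew]
    rw [hb.lie_inl_inl_of_le h hle, graphIsoLinearMap_inr]
    simp only [Sym2.inf_mk, Sym2.sup_mk, inf_eq_left.mpr hle, sup_eq_right.mpr hle]
  · rw [hb.lie_inl_inl_of_not_adj α β h, map_zero,
      hb'.lie_inl_inl_of_not_adj _ _ (f.map_adj_iff.not.mpr h)]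

theorem graphIsoLinearMap_map_lie (hb : IsGraphLieBasis G b) (hb' : IsGraphLieBasis G' b')
    (f : G ≃g G') (x y : L) :
    graphIsoLinearMap b b' f ⁅x, y⁆ =
      ⁅graphIsoLinearMap b b' f x, graphIsoLinearMap b b' f y⁆ := by
  have inr_lie (e : G.edgeSet) (j : S ⊕ G.edgeSet) :
      graphIsoLinearMap b b' f ⁅b (inr e), b j⁆ =
        ⁅graphIsoLinearMap b b' f (b (inr e)), graphIsoLinearMap b b' f (b j)⁆ := by
    rw [hb.inr_lie, map_zero, graphIsoLinearMap_inr, hb'.lie_lie_inl_inl]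
  refine LinearMap.map_lie_of_basis b _ ?_ x y
  rintro (α | e) j
  · rcases j with β | e
    · simp only [graphIsoLinearMap_lie_inl_inl hb hb', graphIsoLinearMap_inl]
    · rw [← lie_skew, map_neg, inr_lie, lie_skew]
  · exact inr_lie e j

namespace IsGraphLieBasis

noncomputable def lieHomOfIso (hb : IsGraphLieBasis G b) (hb' : IsGraphLieBasis G' b')
    (f : G ≃g G') : L →ₗ⁅K⁆ L' :=
  { graphIsoLinearMap b b' f with map_lie' := graphIsoLinearMap_map_lie hb hb' f _ _ }

@[simp]
theorem lieHomOfIso_inl (hb : IsGraphLieBasis G b) (hb' : IsGraphLieBasis G' b')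
    (f : G ≃g G') (α : S) :
    hb.lieHomOfIso hb' f (b (inl α)) = b' (inl (f α)) :=
  graphIsoLinearMap_inl f α

noncomputable def lieEquivOfIso (hb : IsGraphLieBasis G b) (hb' : IsGraphLieBasis G' b')
    (f : G ≃g G') : L ≃ₗ⁅K⁆ L' :=
  { hb.lieHomOfIso hb' f with
    invFun := hb'.lieHomOfIso hb f.symm
    left_inv := LieHom.congr_fun (f := (hb'.lieHomOfIso hb f.symm).comp (hb.lieHomOfIso hb' f))
      (g := LieHom.id) (hb.lieHom_ext fun α => by simp)
    right_inv := LieHom.congr_fun (f := (hb.lieHomOfIso hb' f).comp (hb'.lieHomOfIso hb f.symm))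
      (g := LieHom.id) (hb'.lieHom_ext fun α => by simp) }

theorem lieEquivOfIso_inl (hb : IsGraphLieBasis G b) (hb' : IsGraphLieBasis G' b')
    (f : G ≃g G') (α : S) :
    hb.lieEquivOfIso hb' f (b (inl α)) = b' (inl (f α)) :=
  hb.lieHomOfIso_inl hb' f α

theorem adj_iff_of_lieEquiv [Nontrivial K] (hb : IsGraphLieBasis G b) (hb' : IsGraphLieBasis G' b')
    (φ : L ≃ₗ⁅K⁆ L') (σ : S → S')
    (hφ : ∀ α, φ (b (inl α)) = b' (inl (σ α))) (α β : S) : G.Adj α β ↔ G'.Adj (σ α) (σ β) := by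
  rw [← not_iff_not, ← hb.lie_inl_inl_eq_zero_iff, ← hb'.lie_inl_inl_eq_zero_iff, ← hφ, ← hφ,
    ← LieEquiv.map_lie, EmbeddingLike.map_eq_zero_iff]

end IsGraphLieBasis

end

end

section

open Sum

variable {S : Type*} [Fintype S] [DecidableEq S] [LinearOrder S] (G : SimpleGraph S)
variable {K : Type*} [Field K] [CharZero K]
variable {L : Type*} [LieRing L] [LieAlgebra K L]

/-- Let `𝒢 = (S, E)` be a finite simple graph, `K` a field of
characteristic `0`, and `𝔫_𝒢^K` the Lie algebra associated to `𝒢`: it has a basis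
indexed by `S ⊕ E` (vertex vectors spanning `V` and edge vectors `α∧β` spanning `W`)
with bracket `[α, β] = α∧β` for adjacent vertices, `[α, β] = 0` for non-adjacent
vertices, and `W` central.  For a permutation `σ` of `S` the following are
equivalent: (1) `σ` is a graph automorphism of `𝒢`; (2) there is a Lie algebra
automorphism `φ` of `𝔫_𝒢^K` with `φ(V) = V` whose restriction to `V` is `P_σ`. -/
theorem graphAut_iff_lieAut (b : Module.Basis (S ⊕ G.edgeSet) K L)
    (hbr1 : ∀ α β : S, ∀ h : G.Adj α β, α < β →
      ⁅b (inl α), b (inl β)⁆ = b (inr ⟨s(α, β), G.mem_edgeSet.mpr h⟩))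
    (hbr2 : ∀ α β : S, ¬ G.Adj α β → ⁅b (inl α), b (inl β)⁆ = 0)
    (hbr3 : ∀ (e : G.edgeSet) (x : L), ⁅b (inr e), x⁆ = 0)
    (σ : Equiv.Perm S) :
    (∀ α β : S, G.Adj α β ↔ G.Adj (σ α) (σ β)) ↔
      ∃ φ : L ≃ₗ⁅K⁆ L,
        Submodule.map (φ.toLieHom : L →ₗ[K] L) (vertexSpan G b) = vertexSpan G b ∧
        ∀ α : S, φ (b (inl α)) = b (inl (σ α)) := by
  have hb : IsGraphLieBasis G b := ⟨hbr1, hbr2, hbr3⟩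
  constructor
  · intro hσ
    let f : G ≃g G := ⟨σ, (hσ _ _).symm⟩
    let φ := hb.lieEquivOfIso hb f
    have hφ : ⇑(φ.toLieHom : L →ₗ[K] L) ∘ (fun α => b (inl α)) = (fun α => b (inl α)) ∘ σ :=
      funext (hb.lieEquivOfIso_inl hb f)
    refine ⟨φ, ?_, hb.lieEquivOfIso_inl hb f⟩
    rw [vertexSpan, Submodule.map_span, ← Set.range_comp, hφ, σ.surjective.range_comp]
  · rintro ⟨φ, -, hφ⟩
    exact hb.adj_iff_of_lieEquiv hb φ σ hφ

end
end
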